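/- arXiv:2208.14299 — 2 statements merged into one kernel-verified Lean document; each statement's English description precedes it below -/
import Mathlib

section
/- Assume N_E is convex on (0,∞)² and, for every γ > 0, the map ρ ↦ (d−1) N_E(ρ, γ) is nonincreasing on (0,∞). Let I ⊆ ℝ be an open interval and let ρ, γ : I → (0,∞) be twice differentiable with γ(t)^{d+2}/ρ(t)^d in the interior of D(E) for all t ∈ I. Suppose γ'' ≥ 0 on I and, if d ≥ 2, ρ''/ρ ≤ (1 − 4/d²) γ''/γ on I, while if d = 1, ρ''/ρ = (1 − 4/d²) γ''/γ on I. Then the function e(t) := N_E(ρ(t), γ(t)) satisfies e''(t) ≥ 0 for all t ∈ I; in particular, e is convex on I. -/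
/-!
Along a curve `(ρ, γ)` put `x = ρ'/ρ`, `y = γ'/γ` and `c = γ^(d+2)/ρ^d`. Then `(ρ/γ)^d` and `c`
have logarithmic derivatives `d (x - y)` and `(d + 2) y - d x`, so the chain rule writes `e''` as
`(ρ/γ)^d` times a quadratic form in `(x, y)` (the Hessian of `N_E` in logarithmic coordinates)
plus a linear form in `(ρ''/ρ, γ''/γ)`. Testing the convexity of `N_E` on straight lines makes
the quadratic form nonnegative; in the direction `(d + 2, d)`, along which `c` is stationary, it
reads `(d + 2) ε₁ ≥ 2 E`, and monotonicity of `N_E` in `ρ` gives `ε₁ ≥ E` when `d ≥ 2`. Together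
with `γ'' ≥ 0` and the curvature condition on `ρ''/ρ` these make the linear part nonnegative
(`sq_mul_secondVariation`), so `e'' ≥ 0`.
-/

noncomputable section

open scoped Classical

/-- `ε₁(c) = c E'(c)`. -/
def eps1 (Ef : ℝ → ℝ) (c : ℝ) : ℝ := c * deriv Ef c

/-- `ε₂(c) = c² E''(c)`. -/
def eps2 (Ef : ℝ → ℝ) (c : ℝ) : ℝ := c ^ 2 * deriv (deriv Ef) c

/-- The symmetric 2×2 matrix `𝔹(c)`. -/
def BmatE (d : ℕ) (Ef : ℝ → ℝ) (c : ℝ) : Matrix (Fin 2) (Fin 2) ℝ :=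
  !![eps2 Ef c - ((d : ℝ) - 1) / d * (eps1 Ef c - Ef c),
     eps2 Ef c - 1 / 2 * (eps1 Ef c - Ef c);
     eps2 Ef c - 1 / 2 * (eps1 Ef c - Ef c),
     eps2 Ef c + 1 / 2 * eps1 Ef c]

/-- `N_E(ρ,γ) = (ρ/γ)^d E(γ^{d+2}/ρ^d)`, with extended-real values. -/
def NEfun (d : ℕ) (Efun : ℝ → EReal) (ρ γ : ℝ) : EReal :=
  (((ρ / γ) ^ d : ℝ) : EReal) * Efun (γ ^ (d + 2) / ρ ^ d)

/-- The real-valued version of `N_E` built from a real representative `Ef` of `E`. -/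
def NEreal (d : ℕ) (Ef : ℝ → ℝ) (ρ γ : ℝ) : ℝ :=
  (ρ / γ) ^ d * Ef (γ ^ (d + 2) / ρ ^ d)

open Filter Topology

section LogDeriv

variable {𝕜 : Type*} [NontriviallyNormedField 𝕜] {f g : 𝕜 → 𝕜} {t x y : 𝕜}

theorem HasDerivAt.self_mul_div_self {f' : 𝕜} (hf : HasDerivAt f f' t) (h : f t ≠ 0) :
    HasDerivAt f (f t * (f' / f t)) t := by
  rwa [mul_div_cancel₀ _ h]

theorem HasDerivAt.pow_of_logDeriv (hf : HasDerivAt f (f t * x) t) (n : ℕ) :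
    HasDerivAt (fun u => f u ^ n) (f t ^ n * (n * x)) t := by
  refine (hf.fun_pow n).congr_deriv ?_
  cases n with
  | zero => simp
  | succ k => push_cast; ring

theorem HasDerivAt.div_of_logDeriv (hf : HasDerivAt f (f t * x) t)
    (hg : HasDerivAt g (g t * y) t) (hg0 : g t ≠ 0) :
    HasDerivAt (fun u => f u / g u) (f t / g t * (x - y)) t := by
  refine (hf.div hg hg0).congr_deriv ?_
  field_simp

theorem hasDerivAt_deriv_div_self (hf : DifferentiableAt 𝕜 f t)
    (hf' : DifferentiableAt 𝕜 (deriv f) t) (h : f t ≠ 0) :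
    HasDerivAt (fun u => deriv f u / f u)
      (deriv (deriv f) t / f t - (deriv f t / f t) ^ 2) t := by
  refine (hf'.hasDerivAt.div hf.hasDerivAt h).congr_deriv ?_
  field_simp

end LogDeriv

theorem HasDerivAt.mul_comp_of_logDeriv {a c E : ℝ → ℝ} {t v w : ℝ}
    (ha : HasDerivAt a (a t * v) t) (hc : HasDerivAt c (c t * w) t)
    (hE : DifferentiableAt ℝ E (c t)) :
    HasDerivAt (fun u => a u * E (c u)) (a t * (v * E (c t) + eps1 E (c t) * w)) t := by
  refine (ha.mul (hE.hasDerivAt.comp t hc)).congr_deriv ?_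
  simp only [eps1, Function.comp_apply]
  ring

theorem hasDerivAt_deriv_mul_comp_of_logDeriv {a c E v w : ℝ → ℝ} {t v' w' : ℝ}
    (ha : ∀ᶠ u in 𝓝 t, HasDerivAt a (a u * v u) u)
    (hc : ∀ᶠ u in 𝓝 t, HasDerivAt c (c u * w u) u)
    (hE : ∀ᶠ u in 𝓝 t, DifferentiableAt ℝ E (c u)) (hE' : DifferentiableAt ℝ (deriv E) (c t))
    (hv : HasDerivAt v v' t) (hw : HasDerivAt w w' t) :
    HasDerivAt (deriv fun u => a u * E (c u))
      (a t * (v t ^ 2 * E (c t) + 2 * v t * w t * eps1 E (c t)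
        + (eps1 E (c t) + eps2 E (c t)) * w t ^ 2 + v' * E (c t) + eps1 E (c t) * w')) t := by
  have hderiv : deriv (fun u => a u * E (c u)) =ᶠ[𝓝 t]
      fun u => a u * (v u * E (c u) + c u * deriv E (c u) * w u) := by
    filter_upwards [ha, hc, hE] with u hau hcu hEu
    exact (hau.mul_comp_of_logDeriv hcu hEu).deriv
  have hct := hc.self_of_nhds
  have hEc := hE.self_of_nhds.hasDerivAt.comp t hct
  have hE'c := hE'.hasDerivAt.comp t hct
  refine ((ha.self_of_nhds.fun_mul ((hv.fun_mul hEc).fun_add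
    ((hct.fun_mul hE'c).fun_mul hw))).congr_of_eventuallyEq hderiv).congr_deriv ?_
  simp only [eps1, eps2, Function.comp_apply]
  ring

/-- Along a curve `(ρ, γ)`, with `x = ρ'/ρ`, `y = γ'/γ`, `X = ρ''/ρ`, `Y = γ''/γ` and
`c = γ^(d+2)/ρ^d`, the first and second derivatives of `N_E` are `(ρ/γ)^d` times these. -/
def firstVariation (d : ℕ) (Ef : ℝ → ℝ) (c x y : ℝ) : ℝ :=
  d * (x - y) * Ef c + eps1 Ef c * ((d + 2) * y - d * x)

def secondVariation (d : ℕ) (Ef : ℝ → ℝ) (c x y X Y : ℝ) : ℝ :=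
  (d * (x - y)) ^ 2 * Ef c + 2 * (d * (x - y)) * ((d + 2) * y - d * x) * eps1 Ef c
    + (eps1 Ef c + eps2 Ef c) * ((d + 2) * y - d * x) ^ 2
    + d * ((X - x ^ 2) - (Y - y ^ 2)) * Ef c
    + eps1 Ef c * ((d + 2) * (Y - y ^ 2) - d * (X - x ^ 2))

section Curve

variable {d : ℕ} {Ef ρ γ : ℝ → ℝ} {t : ℝ}

theorem hasDerivAt_div_pow (hρ : DifferentiableAt ℝ ρ t) (hγ : DifferentiableAt ℝ γ t)
    (hρ0 : ρ t ≠ 0) (hγ0 : γ t ≠ 0) :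
    HasDerivAt (fun u => (ρ u / γ u) ^ d)
      ((ρ t / γ t) ^ d * (d * (deriv ρ t / ρ t - deriv γ t / γ t))) t :=
  ((hρ.hasDerivAt.self_mul_div_self hρ0).div_of_logDeriv (hγ.hasDerivAt.self_mul_div_self hγ0)
    hγ0).pow_of_logDeriv d

theorem hasDerivAt_pow_div_pow (hρ : DifferentiableAt ℝ ρ t) (hγ : DifferentiableAt ℝ γ t)
    (hρ0 : ρ t ≠ 0) (hγ0 : γ t ≠ 0) :
    HasDerivAt (fun u => γ u ^ (d + 2) / ρ u ^ d)
      (γ t ^ (d + 2) / ρ t ^ d * ((d + 2) * (deriv γ t / γ t) - d * (deriv ρ t / ρ t))) t := by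
  refine (((hγ.hasDerivAt.self_mul_div_self hγ0).pow_of_logDeriv (d + 2)).div_of_logDeriv
    ((hρ.hasDerivAt.self_mul_div_self hρ0).pow_of_logDeriv d) (pow_ne_zero d hρ0)).congr_deriv ?_
  push_cast
  ring

theorem hasDerivAt_NEreal_comp (hρ : DifferentiableAt ℝ ρ t) (hγ : DifferentiableAt ℝ γ t)
    (hρ0 : ρ t ≠ 0) (hγ0 : γ t ≠ 0) (hE : DifferentiableAt ℝ Ef (γ t ^ (d + 2) / ρ t ^ d)) :
    HasDerivAt (fun u => NEreal d Ef (ρ u) (γ u)) ((ρ t / γ t) ^ d *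
      firstVariation d Ef (γ t ^ (d + 2) / ρ t ^ d) (deriv ρ t / ρ t) (deriv γ t / γ t)) t :=
  (hasDerivAt_div_pow hρ hγ hρ0 hγ0).mul_comp_of_logDeriv
    (hasDerivAt_pow_div_pow hρ hγ hρ0 hγ0) hE

theorem hasDerivAt_deriv_NEreal_comp (hρ : ∀ᶠ u in 𝓝 t, DifferentiableAt ℝ ρ u ∧ ρ u ≠ 0)
    (hγ : ∀ᶠ u in 𝓝 t, DifferentiableAt ℝ γ u ∧ γ u ≠ 0)
    (hρ' : DifferentiableAt ℝ (deriv ρ) t) (hγ' : DifferentiableAt ℝ (deriv γ) t)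
    (hE : ∀ᶠ u in 𝓝 t, DifferentiableAt ℝ Ef (γ u ^ (d + 2) / ρ u ^ d))
    (hE' : DifferentiableAt ℝ (deriv Ef) (γ t ^ (d + 2) / ρ t ^ d)) :
    HasDerivAt (deriv fun u => NEreal d Ef (ρ u) (γ u)) ((ρ t / γ t) ^ d *
      secondVariation d Ef (γ t ^ (d + 2) / ρ t ^ d) (deriv ρ t / ρ t) (deriv γ t / γ t)
        (deriv (deriv ρ) t / ρ t) (deriv (deriv γ) t / γ t)) t := by
  have hx := hasDerivAt_deriv_div_self hρ.self_of_nhds.1 hρ' hρ.self_of_nhds.2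
  have hy := hasDerivAt_deriv_div_self hγ.self_of_nhds.1 hγ' hγ.self_of_nhds.2
  refine (hasDerivAt_deriv_mul_comp_of_logDeriv ?_ ?_ hE hE' ((hx.sub hy).const_mul (d : ℝ))
    ((hy.const_mul ((d : ℝ) + 2)).sub (hx.const_mul (d : ℝ)))).congr_deriv ?_
  · filter_upwards [hρ, hγ] with u hρu hγu
    exact hasDerivAt_div_pow hρu.1 hγu.1 hρu.2 hγu.2
  · filter_upwards [hρ, hγ] with u hρu hγu
    exact hasDerivAt_pow_div_pow hρu.1 hγu.1 hρu.2 hγu.2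
  · simp only [secondVariation, Pi.sub_apply]

end Curve

section Algebra

variable {d : ℕ} {Ef : ℝ → ℝ} {c x y X Y : ℝ}

theorem sq_mul_secondVariation :
    (d : ℝ) ^ 2 * secondVariation d Ef c x y X Y =
      d ^ 2 * secondVariation d Ef c x y 0 0
        + d * ((eps1 Ef c - Ef c) * ((d ^ 2 - 4) * Y - d ^ 2 * X))
        + Y * secondVariation d Ef c (d + 2) d 0 0 := by
  simp only [secondVariation]
  ring

theorem secondVariation_nonneg (hd : 0 < d) (hxy : 0 ≤ secondVariation d Ef c x y 0 0)
    (hdir : 0 ≤ secondVariation d Ef c (d + 2) d 0 0) (hY : 0 ≤ Y)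
    (hXY : 0 ≤ (eps1 Ef c - Ef c) * ((d ^ 2 - 4) * Y - d ^ 2 * X)) :
    0 ≤ secondVariation d Ef c x y X Y := by
  have hd' : (0 : ℝ) < d ^ 2 := by positivity
  rw [← mul_nonneg_iff_of_pos_left hd', sq_mul_secondVariation]
  positivity

end Algebra

theorem accPt_principal_of_mem_nhds {α : Type*} [TopologicalSpace α] [PerfectSpace α] {x : α}
    {s : Set α} (hs : s ∈ 𝓝 x) : AccPt x (𝓟 s) := by
  simpa using (PerfectSpace.univ_preperfect x (Set.mem_univ x)).nhds_inter hs

section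

variable {𝕜 : Type*} [NontriviallyNormedField 𝕜]

theorem hasDerivAt_line (r p s : 𝕜) : HasDerivAt (fun u => r + u * p) p s := by
  simpa using ((hasDerivAt_id s).mul_const p).const_add r

theorem deriv_line (r p : 𝕜) : deriv (fun u => r + u * p) = fun _ => p :=
  funext fun s => (hasDerivAt_line r p s).deriv

end

section Line

variable {d : ℕ} {Efun : ℝ → EReal} {Ef : ℝ → ℝ} {Ω : Set ℝ} {r g : ℝ}

theorem NEfun_eq_coe_NEreal (hrep : ∀ c ∈ Ω, Efun c = ((Ef c : ℝ) : EReal))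
    (hc : g ^ (d + 2) / r ^ d ∈ Ω) : NEfun d Efun r g = ((NEreal d Ef r g : ℝ) : EReal) := by
  rw [NEfun, NEreal, hrep _ hc, EReal.coe_mul]

theorem eventually_line_mem (hΩ : IsOpen Ω) (hr : 0 < r) (hg : 0 < g)
    (hc : g ^ (d + 2) / r ^ d ∈ Ω) (p q : ℝ) :
    ∀ᶠ s in 𝓝 0, 0 < r + s * p ∧ 0 < g + s * q ∧ (g + s * q) ^ (d + 2) / (r + s * p) ^ d ∈ Ω := by
  have hρ : ContinuousAt (fun s : ℝ => r + s * p) 0 := by fun_prop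
  have hγ : ContinuousAt (fun s : ℝ => g + s * q) 0 := by fun_prop
  have hcs : ContinuousAt (fun s : ℝ => (g + s * q) ^ (d + 2) / (r + s * p) ^ d) 0 :=
    (hγ.pow _).div (hρ.pow _) (by simp [hr.ne'])
  filter_upwards [hρ.eventually_mem (Ioi_mem_nhds (by simpa using hr)),
    hγ.eventually_mem (Ioi_mem_nhds (by simpa using hg)),
    hcs.eventually_mem (hΩ.mem_nhds (by simpa using hc))] with s h₁ h₂ h₃
  exact ⟨h₁, h₂, h₃⟩

theorem convexOn_NEreal_line (hrep : ∀ c ∈ Ω, Efun c = ((Ef c : ℝ) : EReal))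
    (hNconv : ∀ ρ₁ γ₁ ρ₂ γ₂ t : ℝ, 0 < ρ₁ → 0 < γ₁ → 0 < ρ₂ → 0 < γ₂ → 0 ≤ t → t ≤ 1 →
      NEfun d Efun (t * ρ₁ + (1 - t) * ρ₂) (t * γ₁ + (1 - t) * γ₂) ≤
        (t : EReal) * NEfun d Efun ρ₁ γ₁ + ((1 - t : ℝ) : EReal) * NEfun d Efun ρ₂ γ₂)
    {S : Set ℝ} (hS : Convex ℝ S) {p q : ℝ}
    (hS_mem : ∀ s ∈ S,
      0 < r + s * p ∧ 0 < g + s * q ∧ (g + s * q) ^ (d + 2) / (r + s * p) ^ d ∈ Ω) :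
    ConvexOn ℝ S (fun s => NEreal d Ef (r + s * p) (g + s * q)) := by
  refine ⟨hS, fun s₁ hs₁ s₂ hs₂ a b ha hb hab => ?_⟩
  obtain ⟨hρ₁, hγ₁, hc₁⟩ := hS_mem s₁ hs₁
  obtain ⟨hρ₂, hγ₂, hc₂⟩ := hS_mem s₂ hs₂
  obtain ⟨-, -, hc⟩ := hS_mem _ (hS hs₁ hs₂ ha hb hab)
  obtain rfl : b = 1 - a := by linarith
  have key := hNconv _ _ _ _ a hρ₁ hγ₁ hρ₂ hγ₂ ha (by linarith)
  simp only [smul_eq_mul] at hc ⊢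
  rw [show a * (r + s₁ * p) + (1 - a) * (r + s₂ * p) = r + (a * s₁ + (1 - a) * s₂) * p by ring,
    show a * (g + s₁ * q) + (1 - a) * (g + s₂ * q) = g + (a * s₁ + (1 - a) * s₂) * q by ring,
    NEfun_eq_coe_NEreal hrep hc, NEfun_eq_coe_NEreal hrep hc₁,
    NEfun_eq_coe_NEreal hrep hc₂] at key
  exact_mod_cast key

theorem antitoneOn_NEreal_line (hd : 1 < d) (hrep : ∀ c ∈ Ω, Efun c = ((Ef c : ℝ) : EReal))
    (hNmono : ∀ γ ρ₁ ρ₂ : ℝ, 0 < γ → 0 < ρ₁ → ρ₁ ≤ ρ₂ →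
      (((d : ℝ) - 1 : ℝ) : EReal) * NEfun d Efun ρ₂ γ ≤
        (((d : ℝ) - 1 : ℝ) : EReal) * NEfun d Efun ρ₁ γ)
    (hg : 0 < g) {S : Set ℝ} {p : ℝ} (hp : 0 ≤ p)
    (hS_mem : ∀ s ∈ S, 0 < r + s * p ∧ g ^ (d + 2) / (r + s * p) ^ d ∈ Ω) :
    AntitoneOn (fun s => NEreal d Ef (r + s * p) g) S := by
  intro s₁ hs₁ s₂ hs₂ hs
  obtain ⟨hρ₁, hc₁⟩ := hS_mem s₁ hs₁
  obtain ⟨-, hc₂⟩ := hS_mem s₂ hs₂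
  have key := hNmono g _ _ hg hρ₁ (add_le_add_right (mul_le_mul_of_nonneg_right hs hp) r)
  rw [NEfun_eq_coe_NEreal hrep hc₁, NEfun_eq_coe_NEreal hrep hc₂] at key
  have hd' : (0 : ℝ) < d - 1 := by
    rw [sub_pos]
    exact_mod_cast hd
  exact le_of_mul_le_mul_left (by exact_mod_cast key) hd'

theorem secondVariation_nonneg_of_convex (hΩ : IsOpen Ω)
    (hrep : ∀ c ∈ Ω, Efun c = ((Ef c : ℝ) : EReal))
    (hNconv : ∀ ρ₁ γ₁ ρ₂ γ₂ t : ℝ, 0 < ρ₁ → 0 < γ₁ → 0 < ρ₂ → 0 < γ₂ → 0 ≤ t → t ≤ 1 →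
      NEfun d Efun (t * ρ₁ + (1 - t) * ρ₂) (t * γ₁ + (1 - t) * γ₂) ≤
        (t : EReal) * NEfun d Efun ρ₁ γ₁ + ((1 - t : ℝ) : EReal) * NEfun d Efun ρ₂ γ₂)
    (hE : ∀ c ∈ Ω, DifferentiableAt ℝ Ef c)
    (hE' : DifferentiableAt ℝ (deriv Ef) (g ^ (d + 2) / r ^ d))
    (hr : 0 < r) (hg : 0 < g) (hc : g ^ (d + 2) / r ^ d ∈ Ω) (p q : ℝ) :
    0 ≤ secondVariation d Ef (g ^ (d + 2) / r ^ d) (p / r) (q / g) 0 0 := by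
  have hline := eventually_line_mem hΩ hr hg hc p q
  obtain ⟨ε, hε, hball⟩ := Metric.eventually_nhds_iff_ball.1 hline
  have hdiff : ∀ s ∈ Metric.ball (0 : ℝ) ε,
      DifferentiableAt ℝ (fun s => NEreal d Ef (r + s * p) (g + s * q)) s := fun s hs =>
    (hasDerivAt_NEreal_comp (hasDerivAt_line r p s).differentiableAt
      (hasDerivAt_line g q s).differentiableAt (hball s hs).1.ne' (hball s hs).2.1.ne'
      (hE _ (hball s hs).2.2)).differentiableAt
  have hmono := (convexOn_NEreal_line hrep hNconv (convex_ball 0 ε) hball).monotoneOn_deriv hdiff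
  have h2 := hasDerivAt_deriv_NEreal_comp (t := 0) (Ef := Ef)
    (hline.mono fun s hs => ⟨(hasDerivAt_line r p s).differentiableAt, hs.1.ne'⟩)
    (hline.mono fun s hs => ⟨(hasDerivAt_line g q s).differentiableAt, hs.2.1.ne'⟩)
    (by rw [deriv_line]; exact differentiableAt_const _)
    (by rw [deriv_line]; exact differentiableAt_const _)
    (hline.mono fun s hs => hE _ hs.2.2) (by simpa using hE')
  simp only [deriv_line, deriv_const', zero_mul, add_zero, zero_div] at h2
  have := h2.hasDerivWithinAt.nonneg_of_monotoneOn
    (accPt_principal_of_mem_nhds (Metric.ball_mem_nhds 0 hε)) hmono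
  exact (mul_nonneg_iff_of_pos_left (by positivity)).1 this

theorem Ef_le_eps1_of_antitone (hd : 1 < d) (hΩ : IsOpen Ω)
    (hrep : ∀ c ∈ Ω, Efun c = ((Ef c : ℝ) : EReal))
    (hNmono : ∀ γ ρ₁ ρ₂ : ℝ, 0 < γ → 0 < ρ₁ → ρ₁ ≤ ρ₂ →
      (((d : ℝ) - 1 : ℝ) : EReal) * NEfun d Efun ρ₂ γ ≤
        (((d : ℝ) - 1 : ℝ) : EReal) * NEfun d Efun ρ₁ γ)
    (hE : DifferentiableAt ℝ Ef (g ^ (d + 2) / r ^ d))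
    (hr : 0 < r) (hg : 0 < g) (hc : g ^ (d + 2) / r ^ d ∈ Ω) :
    Ef (g ^ (d + 2) / r ^ d) ≤ eps1 Ef (g ^ (d + 2) / r ^ d) := by
  obtain ⟨ε, hε, hball⟩ :=
    Metric.eventually_nhds_iff_ball.1 (eventually_line_mem hΩ hr hg hc r 0)
  have hanti := antitoneOn_NEreal_line hd hrep hNmono hg hr.le (S := Metric.ball 0 ε)
    fun s hs => by simpa using And.intro (hball s hs).1 (hball s hs).2.2
  have h1 := hasDerivAt_NEreal_comp (γ := fun _ => g) (t := 0) (d := d)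
    (hasDerivAt_line r r 0).differentiableAt (differentiableAt_const g) (by simpa using hr.ne')
    hg.ne' (by simpa using hE)
  simp only [deriv_line, deriv_const', zero_mul, add_zero, zero_div, div_self hr.ne'] at h1
  have := h1.hasDerivWithinAt.nonpos_of_antitoneOn
    (accPt_principal_of_mem_nhds (Metric.ball_mem_nhds 0 hε)) hanti
  have hd' : (0 : ℝ) < d := by exact_mod_cast (zero_lt_one.trans hd)
  rw [show firstVariation d Ef _ 1 0
      = d * (Ef (g ^ (d + 2) / r ^ d) - eps1 Ef (g ^ (d + 2) / r ^ d)) by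
    simp only [firstVariation]; ring, ← mul_assoc] at this
  exact sub_nonpos.1 (nonpos_of_mul_nonpos_right this (by positivity))

theorem secondVariation_nonneg_of_convex_of_antitone (hd : 1 ≤ d) (hΩ : IsOpen Ω)
    (hrep : ∀ c ∈ Ω, Efun c = ((Ef c : ℝ) : EReal))
    (hNconv : ∀ ρ₁ γ₁ ρ₂ γ₂ t : ℝ, 0 < ρ₁ → 0 < γ₁ → 0 < ρ₂ → 0 < γ₂ → 0 ≤ t → t ≤ 1 →
      NEfun d Efun (t * ρ₁ + (1 - t) * ρ₂) (t * γ₁ + (1 - t) * γ₂) ≤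
        (t : EReal) * NEfun d Efun ρ₁ γ₁ + ((1 - t : ℝ) : EReal) * NEfun d Efun ρ₂ γ₂)
    (hNmono : ∀ γ ρ₁ ρ₂ : ℝ, 0 < γ → 0 < ρ₁ → ρ₁ ≤ ρ₂ →
      (((d : ℝ) - 1 : ℝ) : EReal) * NEfun d Efun ρ₂ γ ≤
        (((d : ℝ) - 1 : ℝ) : EReal) * NEfun d Efun ρ₁ γ)
    (hE : ∀ c ∈ Ω, DifferentiableAt ℝ Ef c)
    (hE' : DifferentiableAt ℝ (deriv Ef) (g ^ (d + 2) / r ^ d))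
    (hr : 0 < r) (hg : 0 < g) (hc : g ^ (d + 2) / r ^ d ∈ Ω) (p q : ℝ) {X Y : ℝ} (hY : 0 ≤ Y)
    (hXY₂ : 2 ≤ d → X ≤ (1 - 4 / (d : ℝ) ^ 2) * Y) (hXY₁ : d = 1 → X = (1 - 4 / (d : ℝ) ^ 2) * Y) :
    0 ≤ secondVariation d Ef (g ^ (d + 2) / r ^ d) (p / r) (q / g) X Y := by
  have hhess := secondVariation_nonneg_of_convex hΩ hrep hNconv hE hE' hr hg hc
  refine secondVariation_nonneg hd (hhess p q) ?_ hY ?_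
  · simpa [hr.ne', hg.ne'] using hhess ((d + 2) * r) (d * g)
  rcases hd.eq_or_lt with rfl | hd
  · rw [hXY₁ rfl]
    norm_num
  refine mul_nonneg (sub_nonneg.2 (Ef_le_eps1_of_antitone hd hΩ hrep hNmono (hE _ hc) hr hg hc)) ?_
  have hd' : (d : ℝ) ≠ 0 := by positivity
  rw [show ((d : ℝ) ^ 2 - 4) * Y - d ^ 2 * X = d ^ 2 * ((1 - 4 / d ^ 2) * Y - X) by field_simp]
  exact mul_nonneg (sq_nonneg _) (sub_nonneg.2 (hXY₂ hd))

end Line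

theorem statement_18_general (d : ℕ) (hd : 1 ≤ d)
    (Efun : ℝ → EReal)
    (Ef : ℝ → ℝ)
    (hrep : ∀ c ∈ interior {c : ℝ | 0 ≤ c ∧ Efun c ≠ ⊤}, Efun c = ((Ef c : ℝ) : EReal))
    (hC2 : ContDiffOn ℝ 2 Ef (interior {c : ℝ | 0 ≤ c ∧ Efun c ≠ ⊤}))
    (hNconv : ∀ ρ₁ γ₁ ρ₂ γ₂ t : ℝ, 0 < ρ₁ → 0 < γ₁ → 0 < ρ₂ → 0 < γ₂ → 0 ≤ t → t ≤ 1 →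
      NEfun d Efun (t * ρ₁ + (1 - t) * ρ₂) (t * γ₁ + (1 - t) * γ₂) ≤
        (t : EReal) * NEfun d Efun ρ₁ γ₁ + ((1 - t : ℝ) : EReal) * NEfun d Efun ρ₂ γ₂)
    (hNmono : ∀ γ ρ₁ ρ₂ : ℝ, 0 < γ → 0 < ρ₁ → ρ₁ ≤ ρ₂ →
      (((d : ℝ) - 1 : ℝ) : EReal) * NEfun d Efun ρ₂ γ ≤
        (((d : ℝ) - 1 : ℝ) : EReal) * NEfun d Efun ρ₁ γ)
    (I : Set ℝ) (hIopen : IsOpen I) (hIconv : Convex ℝ I)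
    (ρ γ : ℝ → ℝ)
    (hρpos : ∀ t ∈ I, 0 < ρ t) (hγpos : ∀ t ∈ I, 0 < γ t)
    (hρdiff : ∀ t ∈ I, DifferentiableAt ℝ ρ t ∧ DifferentiableAt ℝ (deriv ρ) t)
    (hγdiff : ∀ t ∈ I, DifferentiableAt ℝ γ t ∧ DifferentiableAt ℝ (deriv γ) t)
    (hdom : ∀ t ∈ I, γ t ^ (d + 2) / ρ t ^ d ∈ interior {c : ℝ | 0 ≤ c ∧ Efun c ≠ ⊤})
    (hγ'' : ∀ t ∈ I, 0 ≤ deriv (deriv γ) t)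
    (hcurv2 : 2 ≤ d → ∀ t ∈ I,
      deriv (deriv ρ) t / ρ t ≤ (1 - 4 / (d : ℝ) ^ 2) * (deriv (deriv γ) t / γ t))
    (hcurv1 : d = 1 → ∀ t ∈ I,
      deriv (deriv ρ) t / ρ t = (1 - 4 / (d : ℝ) ^ 2) * (deriv (deriv γ) t / γ t)) :
    (∀ t ∈ I, 0 ≤ deriv (deriv (fun u => NEreal d Ef (ρ u) (γ u))) t) ∧
    ConvexOn ℝ I (fun u => NEreal d Ef (ρ u) (γ u)) := by
  set Ω := interior {c : ℝ | 0 ≤ c ∧ Efun c ≠ ⊤}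
  have hΩ : IsOpen Ω := isOpen_interior
  have hE : ∀ c ∈ Ω, DifferentiableAt ℝ Ef c := fun c hc =>
    (hC2.contDiffAt (hΩ.mem_nhds hc)).differentiableAt (by norm_num)
  have hE' : ∀ c ∈ Ω, DifferentiableAt ℝ (deriv Ef) c := fun c hc =>
    ((hC2.deriv_of_isOpen hΩ (m := 1) (by norm_num)).contDiffAt
      (hΩ.mem_nhds hc)).differentiableAt (by norm_num)
  have hF'' (t : ℝ) (ht : t ∈ I) := hasDerivAt_deriv_NEreal_comp
    (mem_of_superset (hIopen.mem_nhds ht) fun u hu => ⟨(hρdiff u hu).1, (hρpos u hu).ne'⟩)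
    (mem_of_superset (hIopen.mem_nhds ht) fun u hu => ⟨(hγdiff u hu).1, (hγpos u hu).ne'⟩)
    (hρdiff t ht).2 (hγdiff t ht).2
    (mem_of_superset (hIopen.mem_nhds ht) fun u hu => hE _ (hdom u hu)) (hE' _ (hdom t ht))
  have hF''_nonneg : ∀ t ∈ I, 0 ≤ deriv (deriv fun u => NEreal d Ef (ρ u) (γ u)) t :=
    fun t ht => (hF'' t ht).deriv ▸ mul_nonneg (pow_nonneg (div_pos (hρpos t ht) (hγpos t ht)).le d)
      (secondVariation_nonneg_of_convex_of_antitone hd hΩ hrep hNconv hNmono hE (hE' _ (hdom t ht))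
        (hρpos t ht) (hγpos t ht) (hdom t ht) _ _ (div_nonneg (hγ'' t ht) (hγpos t ht).le)
        (fun hd₂ => hcurv2 hd₂ t ht) (fun hd₁ => hcurv1 hd₁ t ht))
  refine ⟨hF''_nonneg, convexOn_of_deriv2_nonneg' hIconv (fun t ht => ?_)
    (fun t ht => (hF'' t ht).differentiableAt.differentiableWithinAt) hF''_nonneg⟩
  exact (hasDerivAt_NEreal_comp (hρdiff t ht).1 (hγdiff t ht).1 (hρpos t ht).ne'
    (hγpos t ht).ne' (hE _ (hdom t ht))).differentiableAt.differentiableWithinAt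

theorem statement_18 (d : ℕ) (hd : 1 ≤ d)
    (Efun : ℝ → EReal)
    (hbot : ∀ c, Efun c ≠ ⊥)
    (hE0 : Efun 0 = 0)
    (hlsc : LowerSemicontinuousOn Efun (Set.Ici 0))
    (hconvE : ∀ c₁ ∈ Set.Ici (0 : ℝ), ∀ c₂ ∈ Set.Ici (0 : ℝ), ∀ t ∈ Set.Icc (0 : ℝ) 1,
      Efun (t * c₁ + (1 - t) * c₂) ≤
        (t : EReal) * Efun c₁ + ((1 - t : ℝ) : EReal) * Efun c₂)
    (hfin : ∃ c₀ > (0 : ℝ), Efun c₀ ≠ ⊤)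
    (Ef : ℝ → ℝ)
    (hrep : ∀ c ∈ interior {c : ℝ | 0 ≤ c ∧ Efun c ≠ ⊤}, Efun c = ((Ef c : ℝ) : EReal))
    (hC2 : ContDiffOn ℝ 2 Ef (interior {c : ℝ | 0 ≤ c ∧ Efun c ≠ ⊤}))
    (hNconv : ∀ ρ₁ γ₁ ρ₂ γ₂ t : ℝ, 0 < ρ₁ → 0 < γ₁ → 0 < ρ₂ → 0 < γ₂ → 0 ≤ t → t ≤ 1 →
      NEfun d Efun (t * ρ₁ + (1 - t) * ρ₂) (t * γ₁ + (1 - t) * γ₂) ≤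
        (t : EReal) * NEfun d Efun ρ₁ γ₁ + ((1 - t : ℝ) : EReal) * NEfun d Efun ρ₂ γ₂)
    (hNmono : ∀ γ ρ₁ ρ₂ : ℝ, 0 < γ → 0 < ρ₁ → ρ₁ ≤ ρ₂ →
      (((d : ℝ) - 1 : ℝ) : EReal) * NEfun d Efun ρ₂ γ ≤
        (((d : ℝ) - 1 : ℝ) : EReal) * NEfun d Efun ρ₁ γ)
    (I : Set ℝ) (hIopen : IsOpen I) (hIconv : Convex ℝ I)
    (ρ γ : ℝ → ℝ)
    (hρpos : ∀ t ∈ I, 0 < ρ t) (hγpos : ∀ t ∈ I, 0 < γ t)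
    (hρdiff : ∀ t ∈ I, DifferentiableAt ℝ ρ t ∧ DifferentiableAt ℝ (deriv ρ) t)
    (hγdiff : ∀ t ∈ I, DifferentiableAt ℝ γ t ∧ DifferentiableAt ℝ (deriv γ) t)
    (hdom : ∀ t ∈ I, γ t ^ (d + 2) / ρ t ^ d ∈ interior {c : ℝ | 0 ≤ c ∧ Efun c ≠ ⊤})
    (hγ'' : ∀ t ∈ I, 0 ≤ deriv (deriv γ) t)
    (hcurv2 : 2 ≤ d → ∀ t ∈ I,
      deriv (deriv ρ) t / ρ t ≤ (1 - 4 / (d : ℝ) ^ 2) * (deriv (deriv γ) t / γ t))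
    (hcurv1 : d = 1 → ∀ t ∈ I,
      deriv (deriv ρ) t / ρ t = (1 - 4 / (d : ℝ) ^ 2) * (deriv (deriv γ) t / γ t)) :
    (∀ t ∈ I, 0 ≤ deriv (deriv (fun u => NEreal d Ef (ρ u) (γ u))) t) ∧
    ConvexOn ℝ I (fun u => NEreal d Ef (ρ u) (γ u)) :=
  statement_18_general d hd Efun Ef hrep hC2 hNconv hNmono I hIopen hIconv ρ γ hρpos hγpos hρdiff
    hγdiff hdom hγ'' hcurv2 hcurv1
end
end

section
/- Let d ≥ 1 be an integer, c* ≥ 0, let I ⊆ ℝ be an open interval, and let ρ, γ : I → (0,∞) be twice differentiable functions with γ'' ≥ 0 on I and ρ''/ρ ≤ (1 − 4/d) γ''/γ on I. Then the function c(t) := c* γ(t)^{d+2} / ρ(t)^d satisfies c''(t) ≥ 6 c(t) γ''(t)/γ(t) ≥ 0 for all t ∈ I; in particular, c is convex on I. -/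
/-!
Write `x = γ'/γ` and `y = ρ'/ρ` for the logarithmic derivatives. Since `c' = c ((d+2) x - d y)`
and `x' = γ''/γ - x²`, `y' = ρ''/ρ - y²`, one gets
`c''/c = ((d+2) x - d y)² - (d+2) x² + d y² + (d+2) γ''/γ - d ρ''/ρ`.
The quadratic form `(d+2)(d+1) x² - 2d(d+2) x y + d(d+1) y²` in the first three terms is positive
semidefinite (its discriminant is `-4d(d+2)`), and the curvature hypothesis bounds `-d ρ''/ρ` below
by `(4 - d) γ''/γ`, which leaves `c''/c ≥ 6 γ''/γ`.
-/

open Filter Topology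

theorem HasDerivAt.pow_of_ne_zero {a : ℝ → ℝ} {a' t : ℝ} (ha : HasDerivAt a a' t)
    (ha0 : a t ≠ 0) (m : ℕ) :
    HasDerivAt (fun u => a u ^ m) (a t ^ m * (m * (a' / a t))) t := by
  refine (ha.pow m).congr_deriv ?_
  rcases m with _ | m
  · simp
  · rw [Nat.add_sub_cancel, pow_succ]
    field_simp

theorem HasDerivAt.const_mul_pow_div_pow {a b : ℝ → ℝ} {a' b' t : ℝ} (c : ℝ) (m n : ℕ)
    (ha : HasDerivAt a a' t) (hb : HasDerivAt b b' t) (ha0 : a t ≠ 0) (hb0 : b t ≠ 0) :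
    HasDerivAt (fun u => c * a u ^ m / b u ^ n)
      (c * a t ^ m / b t ^ n * (m * (a' / a t) - n * (b' / b t))) t := by
  have hbn : b t ^ n ≠ 0 := pow_ne_zero n hb0
  refine (((ha.pow_of_ne_zero ha0 m).const_mul c).div
    (hb.pow_of_ne_zero hb0 n) hbn).congr_deriv ?_
  field_simp

theorem hasDerivAt_logDeriv {a : ℝ → ℝ} {t : ℝ} (ha : DifferentiableAt ℝ a t)
    (ha' : DifferentiableAt ℝ (deriv a) t) (ha0 : a t ≠ 0) :
    HasDerivAt (logDeriv a) (deriv (deriv a) t / a t - logDeriv a t ^ 2) t := by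
  refine (ha'.hasDerivAt.div ha.hasDerivAt ha0).congr_deriv ?_
  rw [logDeriv_apply]
  field_simp

theorem hasDerivAt_deriv_of_eventually_hasDerivAt_mul {f g : ℝ → ℝ} {g' t : ℝ}
    (hf : ∀ᶠ u in 𝓝 t, HasDerivAt f (f u * g u) u) (hg : HasDerivAt g g' t) :
    HasDerivAt (deriv f) (f t * (g t ^ 2 + g')) t := by
  have hderiv : deriv f =ᶠ[𝓝 t] fun u => f u * g u := hf.mono fun u hu => hu.deriv
  refine ((hf.self_of_nhds.mul hg).congr_of_eventuallyEq hderiv).congr_deriv ?_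
  ring

theorem hasDerivAt_deriv_const_mul_pow_div_pow {a b : ℝ → ℝ} {t : ℝ} (c : ℝ) (m n : ℕ)
    (ha : ∀ᶠ u in 𝓝 t, DifferentiableAt ℝ a u ∧ a u ≠ 0)
    (hb : ∀ᶠ u in 𝓝 t, DifferentiableAt ℝ b u ∧ b u ≠ 0)
    (ha' : DifferentiableAt ℝ (deriv a) t) (hb' : DifferentiableAt ℝ (deriv b) t) :
    HasDerivAt (deriv fun u => c * a u ^ m / b u ^ n)
      (c * a t ^ m / b t ^ n * ((m * logDeriv a t - n * logDeriv b t) ^ 2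
        + m * (deriv (deriv a) t / a t - logDeriv a t ^ 2)
        - n * (deriv (deriv b) t / b t - logDeriv b t ^ 2))) t := by
  have hf : ∀ᶠ u in 𝓝 t, HasDerivAt (fun u => c * a u ^ m / b u ^ n)
      (c * a u ^ m / b u ^ n * (m * logDeriv a u - n * logDeriv b u)) u :=
    (ha.and hb).mono fun u ⟨⟨hau, ha0⟩, hbu, hb0⟩ =>
      hau.hasDerivAt.const_mul_pow_div_pow c m n hbu.hasDerivAt ha0 hb0
  have hg := ((hasDerivAt_logDeriv ha.self_of_nhds.1 ha' ha.self_of_nhds.2).const_mul (m : ℝ)).sub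
    ((hasDerivAt_logDeriv hb.self_of_nhds.1 hb' hb.self_of_nhds.2).const_mul (n : ℝ))
  exact (hasDerivAt_deriv_of_eventually_hasDerivAt_mul hf hg).congr_deriv (by ring)

theorem six_mul_le_of_le_one_sub_four_div {d : ℝ} (hd : 0 < d) (x y X Y : ℝ)
    (hY : Y ≤ (1 - 4 / d) * X) :
    6 * X ≤ ((d + 2) * x - d * y) ^ 2 + (d + 2) * (X - x ^ 2) - d * (Y - y ^ 2) := by
  have hdY : d * Y ≤ (d - 4) * X := by
    calc d * Y ≤ d * ((1 - 4 / d) * X) := mul_le_mul_of_nonneg_left hY hd.le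
      _ = (d - 4) * X := by field_simp
  have hquad : 0 ≤ (d + 2) * (d + 1) * x ^ 2 - 2 * d * (d + 2) * x * y + d * (d + 1) * y ^ 2 := by
    have hsos : (d + 1) * ((d + 2) * (d + 1) * x ^ 2 - 2 * d * (d + 2) * x * y
        + d * (d + 1) * y ^ 2) = (d + 2) * ((d + 1) * x - d * y) ^ 2 + d * y ^ 2 := by ring
    refine nonneg_of_mul_nonneg_right (a := d + 1) ?_ (by linarith)
    rw [hsos]
    positivity
  linarith

theorem statement_19 (d : ℕ) (hd : 1 ≤ d) (cstar : ℝ) (hcstar : 0 ≤ cstar)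
    (I : Set ℝ) (hIopen : IsOpen I) (hIconv : Convex ℝ I)
    (ρ γ : ℝ → ℝ)
    (hρpos : ∀ t ∈ I, 0 < ρ t) (hγpos : ∀ t ∈ I, 0 < γ t)
    (hρdiff : ∀ t ∈ I, DifferentiableAt ℝ ρ t ∧ DifferentiableAt ℝ (deriv ρ) t)
    (hγdiff : ∀ t ∈ I, DifferentiableAt ℝ γ t ∧ DifferentiableAt ℝ (deriv γ) t)
    (hγ'' : ∀ t ∈ I, 0 ≤ deriv (deriv γ) t)
    (hcurv : ∀ t ∈ I,
      deriv (deriv ρ) t / ρ t ≤ (1 - 4 / (d : ℝ)) * (deriv (deriv γ) t / γ t)) :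
    (∀ t ∈ I,
      6 * (cstar * γ t ^ (d + 2) / ρ t ^ d) * (deriv (deriv γ) t / γ t) ≤
        deriv (deriv (fun u => cstar * γ u ^ (d + 2) / ρ u ^ d)) t ∧
      0 ≤ 6 * (cstar * γ t ^ (d + 2) / ρ t ^ d) * (deriv (deriv γ) t / γ t)) ∧
    ConvexOn ℝ I (fun u => cstar * γ u ^ (d + 2) / ρ u ^ d) := by
  have hnear : ∀ {f : ℝ → ℝ}, (∀ t ∈ I, 0 < f t) → (∀ t ∈ I, DifferentiableAt ℝ f t ∧
      DifferentiableAt ℝ (deriv f) t) → ∀ t ∈ I, ∀ᶠ u in 𝓝 t, DifferentiableAt ℝ f u ∧ f u ≠ 0 :=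
    fun hpos hdiff t ht => eventually_of_mem (hIopen.mem_nhds ht) fun u hu =>
      ⟨(hdiff u hu).1, (hpos u hu).ne'⟩
  have hF'' : ∀ t ∈ I, HasDerivAt (deriv fun u => cstar * γ u ^ (d + 2) / ρ u ^ d) _ t :=
    fun t ht => hasDerivAt_deriv_const_mul_pow_div_pow cstar (d + 2) d
      (hnear hγpos hγdiff t ht) (hnear hρpos hρdiff t ht) (hγdiff t ht).2 (hρdiff t ht).2
  have hlower : ∀ t ∈ I, 6 * (cstar * γ t ^ (d + 2) / ρ t ^ d) * (deriv (deriv γ) t / γ t) ≤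
      deriv (deriv (fun u => cstar * γ u ^ (d + 2) / ρ u ^ d)) t := by
    intro t ht
    have hc : 0 ≤ cstar * γ t ^ (d + 2) / ρ t ^ d := by
      have := hγpos t ht; have := hρpos t ht; positivity
    rw [(hF'' t ht).deriv, mul_assoc, mul_left_comm]
    refine mul_le_mul_of_nonneg_left ?_ hc
    push_cast
    exact six_mul_le_of_le_one_sub_four_div (by exact_mod_cast hd) _ _ _ _ (hcurv t ht)
  have hnonneg : ∀ t ∈ I, 0 ≤ 6 * (cstar * γ t ^ (d + 2) / ρ t ^ d) * (deriv (deriv γ) t / γ t) :=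
    fun t ht => by have := hγpos t ht; have := hρpos t ht; have := hγ'' t ht; positivity
  refine ⟨fun t ht => ⟨hlower t ht, hnonneg t ht⟩, convexOn_of_deriv2_nonneg' hIconv ?_ ?_ ?_⟩
  · exact fun t ht => ((hγdiff t ht).1.hasDerivAt.const_mul_pow_div_pow cstar (d + 2) d
      (hρdiff t ht).1.hasDerivAt (hγpos t ht).ne' (hρpos t ht).ne').differentiableAt.differentiableWithinAt
  · exact fun t ht => (hF'' t ht).differentiableAt.differentiableWithinAt
  · exact fun t ht => (hnonneg t ht).trans (hlower t ht)
end
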